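/- arXiv:1309.0158 — 4 statements merged into one kernel-verified Lean document; each statement's English description precedes it below -/
import Mathlib

section
/- Let P and P̃ be stochastic matrices on a finite set 𝒱. Suppose P is irreducible with invariant probability vector π and finite mixing time t_mix, and let π̃ be an invariant probability vector of P̃. Then for every subset W ⊆ 𝒱 containing supp(P̃ − P), one has ‖π̃ − π‖ ≤ Ψ(t_mix · π̃(W)), where π̃(W) := Σ_{w∈W} π̃_w. -/
open scoped Classical BigOperators
open Finset

variable {V : Type*}

/-- A (row-)stochastic matrix: nonnegative entries, rows summing to one. -/
def IsStochastic [Fintype V] (P : Matrix V V ℝ) : Prop :=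
  (∀ u v, 0 ≤ P u v) ∧ ∀ u, ∑ v, P u v = 1

/-- Irreducibility: the digraph with an edge `(u,v)` whenever `P u v > 0`
is strongly connected. -/
def IrreducibleMatrix [Fintype V] (P : Matrix V V ℝ) : Prop :=
  ∀ u v : V, Relation.ReflTransGen (fun a b => 0 < P a b) u v

/-- `p` is an invariant probability (row) vector of `P`. -/
def InvariantProb [Fintype V] (P : Matrix V V ℝ) (p : V → ℝ) : Prop :=
  (∀ v, 0 ≤ p v) ∧ (∑ v, p v = 1) ∧ ∀ v, ∑ u, p u * P u v = p v

/-- Total variation distance. -/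
noncomputable def tvDist [Fintype V] (mu p : V → ℝ) : ℝ :=
  (1 / 2) * ∑ v, |mu v - p v|

/-- The smallest positive solution of `x * log (e^2 / x) = 1`. -/
noncomputable def xstar : ℝ :=
  sInf {x : ℝ | 0 < x ∧ x * Real.log (Real.exp 2 / x) = 1}

/-- The function `Ψ`: `Ψ(x) = x log(e²/x)` for `x ≤ x*`, and `1` for `x > x*`
(note `Ψ(0) = 0` since `Real.log (e²/0) = Real.log 0 = 0`). -/
noncomputable def Psi (x : ℝ) : ℝ :=
  if x ≤ xstar then x * Real.log (Real.exp 2 / x) else 1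

open Fin.NatCast in
/-- `phi P W w k` is the probability that a chain with transition matrix `P`
started at `w` exits `W` exactly at time `k`: the sum over `(k+1)`-tuples
`ξ` with `ξ 0 = w`, `ξ l ∈ W` for `0 < l < k`, `ξ k ∉ W`, of `∏ P (ξ (l-1)) (ξ l)`. -/
noncomputable def phi [Fintype V] (P : Matrix V V ℝ) (W : Finset V) (w : V) (k : ℕ) : ℝ :=
  ∑ ξ ∈ Finset.univ.filter (fun ξ : Fin (k + 1) → V =>
      ξ 0 = w ∧ (∀ l : ℕ, 0 < l → l < k → ξ l ∈ W) ∧ ξ k ∉ W),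
    ∏ l ∈ Finset.range k, P (ξ l) (ξ (l + 1))

/-- `(1/t) * min_{w ∈ W, p w > 0} ∑_{k=1}^t phi w k` (the minimum over an empty
index set is taken to be `1`). -/
noncomputable def exitProbAux [Fintype V] (P : Matrix V V ℝ) (p : V → ℝ) (W : Finset V)
    (t : ℕ) : ℝ :=
  if h : (W.filter fun w => 0 < p w).Nonempty then
    (W.filter fun w => 0 < p w).inf' h
      (fun w => (1 / (t : ℝ)) * ∑ k ∈ Finset.Icc 1 t, phi P W w k)
  else 1

/-- The exit probability from `W`:
`sup_{t ≥ 1} min_{w ∈ W, p w > 0} (1/t) ∑_{k=1}^t phi w k`. -/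
noncomputable def exitProb [Fintype V] (P : Matrix V V ℝ) (p : V → ℝ) (W : Finset V) : ℝ :=
  sSup {x : ℝ | ∃ t : ℕ, 1 ≤ t ∧ x = exitProbAux P p W t}

/-- The entrance time `τ*_W := min_{u ∉ W} τ^u`. -/
noncomputable def entranceTime (tau : V → ℝ) (W : Finset V) : ℝ :=
  sInf {x : ℝ | ∃ u, u ∉ W ∧ x = tau u}

/-!
One step of `P` moves `π̃` by at most `π̃(W)` in total variation, since `π̃ = π̃ P̃` and the rows of
`P̃` and `P` agree off `W`; as `P` does not expand total variation, `k · t_mix` steps move it by at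
most `k · t_mix · π̃(W)`. Meanwhile Dobrushin's contraction gives
`‖π̃ P^{k t_mix} - π‖ ≤ e^{-k} ‖π̃ - π‖`. Hence `‖π̃ - π‖ ≤ k · t_mix · π̃(W) + e^{-k}` for every
`k`, and `k = ⌈log (1 / (t_mix π̃(W)))⌉` gives `Ψ`.
-/

open Matrix

section TotalVariation

variable [Fintype V]

noncomputable def tvNorm (z : V → ℝ) : ℝ := (1 / 2) * ∑ v, |z v|

theorem tvDist_eq_tvNorm (μ ν : V → ℝ) : tvDist μ ν = tvNorm (μ - ν) := rfl

theorem tvNorm_nonneg (z : V → ℝ) : 0 ≤ tvNorm z := by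
  unfold tvNorm; positivity

theorem tvDist_nonneg (μ ν : V → ℝ) : 0 ≤ tvDist μ ν := tvNorm_nonneg _

theorem tvDist_triangle (μ ν ρ : V → ℝ) : tvDist μ ρ ≤ tvDist μ ν + tvDist ν ρ := by
  simp only [tvDist, ← mul_add, ← sum_add_distrib]
  gcongr
  exact abs_sub_le _ _ _

theorem tvDist_le_one {μ ν : V → ℝ} (hμ : ∀ v, 0 ≤ μ v) (hμ1 : ∑ v, μ v = 1)
    (hν : ∀ v, 0 ≤ ν v) (hν1 : ∑ v, ν v = 1) : tvDist μ ν ≤ 1 := by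
  have : ∑ v, |μ v - ν v| ≤ ∑ v, (μ v + ν v) := sum_le_sum fun v _ =>
    (abs_sub _ _).trans_eq (by rw [abs_of_nonneg (hμ v), abs_of_nonneg (hν v)])
  rw [sum_add_distrib, hμ1, hν1] at this
  unfold tvDist; linarith

theorem tvNorm_sum_smul_le {ι : Type*} [Fintype ι] (x : ι → ℝ) (M : ι → V → ℝ) :
    tvNorm (∑ i, x i • M i) ≤ ∑ i, |x i| * tvNorm (M i) := by
  simp only [tvNorm, Finset.sum_apply, Pi.smul_apply, smul_eq_mul, mul_left_comm _ (1 / 2 : ℝ),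
    ← mul_sum]
  gcongr
  calc ∑ v, |∑ i, x i * M i v| ≤ ∑ v, ∑ i, |x i| * |M i v| :=
        sum_le_sum fun v _ => (abs_sum_le_sum_abs _ _).trans_eq (by simp only [abs_mul])
    _ = ∑ i, |x i| * ∑ v, |M i v| := by rw [sum_comm]; simp only [mul_sum]

theorem tvNorm_smul (a : ℝ) (z : V → ℝ) : tvNorm (a • z) = |a| * tvNorm z := by
  simp only [tvNorm, Pi.smul_apply, smul_eq_mul, abs_mul, ← mul_sum]
  ring

theorem sum_negPart_eq_sum_posPart {z : V → ℝ} (hz : ∑ v, z v = 0) :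
    ∑ v, (z v)⁻ = ∑ v, (z v)⁺ := by
  have : ∑ v, ((z v)⁺ - (z v)⁻) = 0 := by simp only [posPart_sub_negPart, hz]
  rw [sum_sub_distrib, sub_eq_zero] at this
  exact this.symm

theorem tvNorm_eq_sum_posPart {z : V → ℝ} (hz : ∑ v, z v = 0) : tvNorm z = ∑ v, (z v)⁺ := by
  simp only [tvNorm, ← posPart_add_negPart, sum_add_distrib, sum_negPart_eq_sum_posPart hz]
  ring

theorem tvNorm_row_of_mem_rowStochastic {Q : Matrix V V ℝ} (hQ : Q ∈ rowStochastic ℝ V)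
    (u : V) : tvNorm (Q u) = 1 / 2 := by
  simp only [tvNorm, abs_of_nonneg (hQ.1 u _), sum_row_of_mem_rowStochastic hQ u, mul_one]

theorem tvDist_vecMul_le {Q : Matrix V V ℝ} (hQ : Q ∈ rowStochastic ℝ V) (μ ν : V → ℝ) :
    tvDist (μ ᵥ* Q) (ν ᵥ* Q) ≤ tvDist μ ν := by
  rw [tvDist_eq_tvNorm, tvDist_eq_tvNorm, ← sub_vecMul, vecMul_eq_sum]
  refine (tvNorm_sum_smul_le _ _).trans_eq ?_
  simp only [tvNorm_row_of_mem_rowStochastic hQ, ← sum_mul]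
  rw [tvNorm]
  ring

theorem sum_posPart_smul_vecMul {z : V → ℝ} (hz : ∑ v, z v = 0) (Q : Matrix V V ℝ) :
    (∑ v, (z v)⁺) • (z ᵥ* Q) = ∑ x : V × V, ((z x.1)⁺ * (z x.2)⁻) • (Q x.1 - Q x.2) := by
  ext v
  simp only [Pi.smul_apply, smul_eq_mul, Finset.sum_apply, Pi.sub_apply, Fintype.sum_prod_type,
    vecMul, dotProduct]
  calc (∑ v, (z v)⁺) * ∑ u, z u * Q u v
      = (∑ u, (z u)⁺ * Q u v) * ∑ w, (z w)⁻ - (∑ u, (z u)⁺) * ∑ w, (z w)⁻ * Q w v := by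
        rw [sum_negPart_eq_sum_posPart hz, mul_comm _ (∑ v, (z v)⁺), ← mul_sub,
          ← sum_sub_distrib]
        exact congrArg (_ * ·) (sum_congr rfl fun u _ => by rw [← sub_mul, posPart_sub_negPart])
    _ = ∑ u, ∑ w, (z u)⁺ * (z w)⁻ * (Q u v - Q w v) := by
        simp only [sum_mul_sum, ← sum_sub_distrib]
        exact sum_congr rfl fun u _ => sum_congr rfl fun w _ => by ring

theorem tvDist_vecMul_le_mul {Q : Matrix V V ℝ} {c : ℝ} (hQ : ∀ u w, tvDist (Q u) (Q w) ≤ c)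
    {μ ν : V → ℝ} (hμν : ∑ v, μ v = ∑ v, ν v) :
    tvDist (μ ᵥ* Q) (ν ᵥ* Q) ≤ c * tvDist μ ν := by
  rw [tvDist_eq_tvNorm, tvDist_eq_tvNorm, ← sub_vecMul]
  set z := μ - ν
  have hz : ∑ v, z v = 0 := by simp only [z, Pi.sub_apply, sum_sub_distrib, hμν, sub_self]
  set m := ∑ v, (z v)⁺ with hm
  have hneg : ∑ v, (z v)⁻ = m := sum_negPart_eq_sum_posPart hz
  have hbound : m * tvNorm (z ᵥ* Q) ≤ m * (c * m) := by
    calc m * tvNorm (z ᵥ* Q) = tvNorm (m • (z ᵥ* Q)) := by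
          rw [tvNorm_smul, abs_of_nonneg (sum_nonneg fun v _ => posPart_nonneg _)]
      _ ≤ ∑ x : V × V, |(z x.1)⁺ * (z x.2)⁻| * tvNorm (Q x.1 - Q x.2) :=
          sum_posPart_smul_vecMul hz Q ▸ tvNorm_sum_smul_le _ _
      _ ≤ ∑ x : V × V, (z x.1)⁺ * (z x.2)⁻ * c := sum_le_sum fun x _ => by
          have hpn := mul_nonneg (posPart_nonneg (z x.1)) (negPart_nonneg (z x.2))
          rw [abs_of_nonneg hpn]
          exact mul_le_mul_of_nonneg_left (hQ x.1 x.2) hpn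
      _ = m * (c * m) := by
          simp only [Fintype.sum_prod_type, ← sum_mul, ← mul_sum, hneg, ← hm]
          ring
  rw [tvNorm_eq_sum_posPart hz]
  rcases (sum_nonneg fun v _ => posPart_nonneg (z v) : 0 ≤ m).eq_or_lt with h0 | hpos
  · have hp : ∀ v, (z v)⁺ = 0 := fun v =>
      (sum_eq_zero_iff_of_nonneg fun v _ => posPart_nonneg (z v)).1 h0.symm v (mem_univ v)
    have hn : ∀ v, (z v)⁻ = 0 := fun v =>
      (sum_eq_zero_iff_of_nonneg fun v _ => negPart_nonneg (z v)).1 (hneg.trans h0.symm) v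
        (mem_univ v)
    have hz0 : z = 0 := funext fun v => by rw [← posPart_sub_negPart (z v), hp, hn, sub_zero]; rfl
    simp [hz0, tvNorm]
  · exact le_of_mul_le_mul_left hbound hpos

theorem tvDist_rows_le_one {Q : Matrix V V ℝ} (hQ : Q ∈ rowStochastic ℝ V) (u w : V) :
    tvDist (Q u) (Q w) ≤ 1 :=
  tvDist_le_one (hQ.1 u) (sum_row_of_mem_rowStochastic hQ u) (hQ.1 w)
    (sum_row_of_mem_rowStochastic hQ w)

theorem tvDist_rows_mul_le {A B : Matrix V V ℝ} (hA : A ∈ rowStochastic ℝ V) {a b : ℝ}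
    (hArows : ∀ u w, tvDist (A u) (A w) ≤ a) (hBrows : ∀ u w, tvDist (B u) (B w) ≤ b)
    (u w : V) : tvDist ((A * B) u) ((A * B) w) ≤ b * a := by
  rw [mul_apply_eq_vecMul, mul_apply_eq_vecMul]
  refine (tvDist_vecMul_le_mul hBrows ?_).trans ?_
  · rw [sum_row_of_mem_rowStochastic hA u, sum_row_of_mem_rowStochastic hA w]
  · exact mul_le_mul_of_nonneg_left (hArows u w) ((tvDist_nonneg _ _).trans (hBrows u u))

theorem tvDist_rows_pow_mul_le {P : Matrix V V ℝ} (hP : P ∈ rowStochastic ℝ V) {t : ℕ} {ε : ℝ}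
    (hε : ∀ u w, tvDist ((P ^ t) u) ((P ^ t) w) ≤ ε) (k : ℕ) (u w : V) :
    tvDist ((P ^ (k * t)) u) ((P ^ (k * t)) w) ≤ ε ^ k := by
  induction k generalizing u w with
  | zero =>
    rw [zero_mul, pow_zero, pow_zero]
    exact tvDist_rows_le_one (one_mem _) u w
  | succ k ih =>
    rw [Nat.succ_mul, pow_add, pow_succ']
    exact tvDist_rows_mul_le (pow_mem hP _) ih hε u w

theorem tvDist_vecMul_pow_le {P : Matrix V V ℝ} (hP : P ∈ rowStochastic ℝ V) (μ : V → ℝ)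
    (t : ℕ) : tvDist μ (μ ᵥ* P ^ t) ≤ t * tvDist μ (μ ᵥ* P) := by
  induction t with
  | zero => simp [tvDist]
  | succ t ih =>
    calc tvDist μ (μ ᵥ* P ^ (t + 1))
        ≤ tvDist μ (μ ᵥ* P ^ t) + tvDist (μ ᵥ* P ^ t) (μ ᵥ* P ᵥ* P ^ t) := by
          rw [vecMul_vecMul, ← pow_succ']
          exact tvDist_triangle _ _ _
      _ ≤ t * tvDist μ (μ ᵥ* P) + tvDist μ (μ ᵥ* P) :=
          add_le_add ih (tvDist_vecMul_le (pow_mem hP t) _ _)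
      _ = (t + 1 : ℕ) * tvDist μ (μ ᵥ* P) := by push_cast; ring

theorem tvDist_vecMul_le_sum_of_rows_eq_off {P P' : Matrix V V ℝ} (hP : P ∈ rowStochastic ℝ V)
    (hP' : P' ∈ rowStochastic ℝ V) {μ : V → ℝ} (hμ : ∀ v, 0 ≤ μ v) {W : Finset V}
    (hW : ∀ u, P u ≠ P' u → u ∈ W) : tvDist (μ ᵥ* P') (μ ᵥ* P) ≤ ∑ w ∈ W, μ w := by
  rw [tvDist_eq_tvNorm, ← vecMul_sub, vecMul_eq_sum]
  refine (tvNorm_sum_smul_le _ _).trans ?_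
  calc ∑ u, |μ u| * tvNorm ((P' - P) u) = ∑ u ∈ W, |μ u| * tvDist (P' u) (P u) := by
        refine (sum_subset (subset_univ W) fun u _ hu => ?_).symm
        change |μ u| * tvDist (P' u) (P u) = 0
        rw [not_imp_comm.1 (hW u) hu]
        simp [tvDist]
    _ ≤ ∑ u ∈ W, μ u := sum_le_sum fun u _ => by
        rw [abs_of_nonneg (hμ u)]
        exact mul_le_of_le_one_right (hμ u) (tvDist_le_one (hP'.1 u)
          (sum_row_of_mem_rowStochastic hP' u) (hP.1 u) (sum_row_of_mem_rowStochastic hP u))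

theorem vecMul_pow_eq_self {P : Matrix V V ℝ} {π : V → ℝ} (hπ : π ᵥ* P = π) (t : ℕ) :
    π ᵥ* P ^ t = π := by
  induction t with
  | zero => exact vecMul_one π
  | succ t ih => rw [pow_succ, ← vecMul_vecMul, ih, hπ]

theorem InvariantProb.vecMul_eq {P : Matrix V V ℝ} {π : V → ℝ} (hπ : InvariantProb P π) :
    π ᵥ* P = π :=
  funext hπ.2.2

theorem tvDist_le_of_perturbation {P P' : Matrix V V ℝ} (hP : P ∈ rowStochastic ℝ V)
    (hP' : P' ∈ rowStochastic ℝ V) {π π' : V → ℝ} (hπ : π ᵥ* P = π) (hπ' : π' ᵥ* P' = π')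
    (hπ'0 : ∀ v, 0 ≤ π' v) (hmass : ∑ v, π' v = ∑ v, π v) {t : ℕ} {ε : ℝ}
    (hε : ∀ u w, tvDist ((P ^ t) u) ((P ^ t) w) ≤ ε) {W : Finset V}
    (hW : ∀ u, P u ≠ P' u → u ∈ W) (k : ℕ) :
    tvDist π' π ≤ k * (t * ∑ w ∈ W, π' w) + ε ^ k * tvDist π' π := by
  have hdrift : tvDist π' (π' ᵥ* P ^ (k * t)) ≤ (k * t : ℕ) * ∑ w ∈ W, π' w := by
    refine (tvDist_vecMul_pow_le hP π' _).trans (mul_le_mul_of_nonneg_left ?_ (Nat.cast_nonneg _))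
    nth_rw 1 [← hπ']
    exact tvDist_vecMul_le_sum_of_rows_eq_off hP hP' hπ'0 hW
  have hmix : tvDist (π' ᵥ* P ^ (k * t)) π ≤ ε ^ k * tvDist π' π := by
    conv_lhs => rw [← vecMul_pow_eq_self hπ (k * t)]
    exact tvDist_vecMul_le_mul (tvDist_rows_pow_mul_le hP hε k) hmass
  calc tvDist π' π ≤ tvDist π' (π' ᵥ* P ^ (k * t)) + tvDist (π' ᵥ* P ^ (k * t)) π :=
        tvDist_triangle _ _ _
    _ ≤ (k * t : ℕ) * ∑ w ∈ W, π' w + ε ^ k * tvDist π' π := add_le_add hdrift hmix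
    _ = k * (t * ∑ w ∈ W, π' w) + ε ^ k * tvDist π' π := by push_cast; ring

end TotalVariation

theorem xstar_le_one : xstar ≤ 1 := by
  set f : ℝ → ℝ := fun x => x * Real.log (Real.exp 2 / x)
  have hcont : ContinuousOn f (Set.Icc (Real.exp (-2)) 1) := by
    have hpos : ∀ x ∈ Set.Icc (Real.exp (-2)) 1, x ≠ 0 := fun x hx =>
      ((Real.exp_pos _).trans_le hx.1).ne'
    exact continuousOn_id.mul ((continuousOn_const.div continuousOn_id hpos).log
      fun x hx => div_ne_zero (Real.exp_ne_zero 2) (hpos x hx))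
  have hleft : f (Real.exp (-2)) ≤ 1 := by
    have he : 2 ≤ Real.exp 1 := by linarith [Real.add_one_le_exp 1]
    have h4 : 4 ≤ Real.exp 2 := by
      rw [show (2 : ℝ) = 1 + 1 by norm_num, Real.exp_add]; nlinarith
    simp only [f]
    rw [← Real.exp_sub, Real.log_exp, Real.exp_neg, inv_mul_le_iff₀ (Real.exp_pos 2)]
    linarith
  have hright : 1 ≤ f 1 := by simp [f]
  obtain ⟨c, hc, hfc⟩ := intermediate_value_Icc (Real.exp_le_one_iff.2 (by norm_num)) hcont
    (show (1 : ℝ) ∈ Set.Icc (f (Real.exp (-2))) (f 1) from ⟨hleft, hright⟩)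
  refine (csInf_le ⟨0, fun x hx => hx.1.le⟩ ?_).trans hc.2
  exact ⟨(Real.exp_pos _).trans_le hc.1, hfc⟩

theorem exists_nat_mul_add_exp_neg_le {b : ℝ} (hb0 : 0 < b) (hb1 : b ≤ 1) :
    ∃ k : ℕ, k * b + Real.exp (-k) ≤ b * Real.log (Real.exp 2 / b) := by
  have hlog : 0 ≤ -Real.log b := neg_nonneg.2 (Real.log_nonpos hb0.le hb1)
  refine ⟨⌈-Real.log b⌉₊, ?_⟩
  have hexp : Real.exp (-⌈-Real.log b⌉₊) ≤ b := by
    calc Real.exp (-⌈-Real.log b⌉₊) ≤ Real.exp (-(-Real.log b)) :=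
          Real.exp_le_exp.2 (neg_le_neg (Nat.le_ceil _))
      _ = b := by rw [neg_neg, Real.exp_log hb0]
  have hk : (⌈-Real.log b⌉₊ : ℝ) * b ≤ (1 - Real.log b) * b :=
    mul_le_mul_of_nonneg_right (by linarith [Nat.ceil_lt_add_one hlog]) hb0.le
  rw [Real.log_div (Real.exp_ne_zero 2) hb0.ne', Real.log_exp]
  linarith

theorem le_Psi_of_forall_le {x b : ℝ} (hb : 0 ≤ b) (hx1 : x ≤ 1)
    (hx : ∀ k : ℕ, x ≤ k * b + Real.exp (-k)) : x ≤ Psi b := by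
  unfold Psi
  split_ifs with hbx
  · rcases hb.eq_or_lt with rfl | hpos
    · have hlim : Filter.Tendsto (fun k : ℕ => Real.exp (-k)) Filter.atTop (nhds 0) :=
        Real.tendsto_exp_neg_atTop_nhds_zero.comp tendsto_natCast_atTop_atTop
      simpa using ge_of_tendsto' hlim fun k => by simpa using hx k
    · obtain ⟨k, hk⟩ := exists_nat_mul_add_exp_neg_le hpos (hbx.trans xstar_le_one)
      exact (hx k).trans hk
  · exact hx1

theorem stmt0_general [Fintype V] (P Pt : Matrix V V ℝ) (pi pit : V → ℝ) (tmix : ℕ)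
    (hP : IsStochastic P) (hPt : IsStochastic Pt)
    (hpi : InvariantProb P pi) (hpit : InvariantProb Pt pit)
    (htmix2 : ∀ u v : V, tvDist ((P ^ tmix) u) ((P ^ tmix) v) ≤ 1 / Real.exp 1)
    (W : Finset V) (hW : ∀ u : V, P u ≠ Pt u → u ∈ W) :
    tvDist pit pi ≤ Psi ((tmix : ℝ) * ∑ w ∈ W, pit w) := by
  have hle1 : tvDist pit pi ≤ 1 := tvDist_le_one hpit.1 hpit.2.1 hpi.1 hpi.2.1
  refine le_Psi_of_forall_le (mul_nonneg (Nat.cast_nonneg _) (sum_nonneg fun w _ => hpit.1 w))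
    hle1 fun k => ?_
  have hε : (1 / Real.exp 1) ^ k = Real.exp (-k) := by
    rw [one_div, ← Real.exp_neg, ← Real.exp_nat_mul, mul_neg_one]
  calc tvDist pit pi ≤ k * (tmix * ∑ w ∈ W, pit w) + (1 / Real.exp 1) ^ k * tvDist pit pi :=
        tvDist_le_of_perturbation (mem_rowStochastic_iff_sum.2 hP)
          (mem_rowStochastic_iff_sum.2 hPt) hpi.vecMul_eq hpit.vecMul_eq hpit.1
          (by rw [hpit.2.1, hpi.2.1]) htmix2 hW k
    _ ≤ k * (tmix * ∑ w ∈ W, pit w) + Real.exp (-k) := by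
        rw [hε]
        exact add_le_add_right (mul_le_of_le_one_right (Real.exp_pos _).le hle1) _

/-- Lemma 1 of the paper. If `P` is irreducible with invariant
probability vector `pi` and mixing time `tmix`, `pit` is an invariant probability
vector of `Pt`, and `W ⊇ supp(Pt - P)`, then `‖pit - pi‖ ≤ Ψ(tmix · pit(W))`. -/
theorem stmt0 [Fintype V] (P Pt : Matrix V V ℝ) (pi pit : V → ℝ) (tmix : ℕ)
    (hP : IsStochastic P) (hPt : IsStochastic Pt) (hirr : IrreducibleMatrix P)
    (hpi : InvariantProb P pi) (hpit : InvariantProb Pt pit)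
    (htmix1 : 1 ≤ tmix)
    (htmix2 : ∀ u v : V, tvDist ((P ^ tmix) u) ((P ^ tmix) v) ≤ 1 / Real.exp 1)
    (htmix3 : ∀ s : ℕ, 1 ≤ s →
      (∀ u v : V, tvDist ((P ^ s) u) ((P ^ s) v) ≤ 1 / Real.exp 1) → tmix ≤ s)
    (W : Finset V) (hW : ∀ u : V, P u ≠ Pt u → u ∈ W) :
    tvDist pit pi ≤ Psi ((tmix : ℝ) * ∑ w ∈ W, pit w) :=
  stmt0_general P Pt pi pit tmix hP hPt hpi hpit htmix2 W hW
end

section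
/- Let P̃ be a stochastic matrix on a finite set 𝒱 with invariant probability vector π̃, and let W ⊆ 𝒱 with W ≠ 𝒱. Suppose (τ^u)_{u∈𝒱} is a family of nonnegative real numbers satisfying τ^u = 0 for u ∈ W and τ^u = 1 + Σ_{v∈𝒱} P̃_{uv} τ^v for u ∈ 𝒱∖W, and set τ* := min_{u∈𝒱∖W} τ^u. Then π̃(W) · γ̃_W · τ* ≤ 1, where π̃(W) := Σ_{w∈W} π̃_w and γ̃_W is the exit probability from W. -/
open scoped Classical BigOperators
open Finset

variable {V : Type*}

/-!
Write `T ≥ 1` for the first time the chain leaves `W` and `ψ_w(k) = E_w[τ(X_T); T = k]`. Then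
`τ* φ_w(k) ≤ ψ_w(k)`, `ψ(1) = P τ` because `τ` vanishes on `W`, and `ψ(k + 1) = P_W ψ(k)` for the
restriction `P_W` of `P` to `W`. Invariance of `π` makes its restriction to `W` sub-invariant for
`P_W`, so `∑_{w ∈ W} π_w ψ_w(k) ≤ ∑_{w ∈ W} π_w (P τ)_w`, and the hitting equations turn the
latter into `π(Wᶜ) ≤ 1`. Averaging over `1 ≤ k ≤ t` bounds `π(W) τ*` times the minimal average
exit probability.
-/

open Fin.NatCast Matrix

noncomputable def pathWeight (P : Matrix V V ℝ) {k : ℕ} (ξ : Fin (k + 1) → V) : ℝ :=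
  ∏ l ∈ Finset.range k, P (ξ l) (ξ (l + 1))

theorem pathWeight_nonneg {P : Matrix V V ℝ} (hP : ∀ u v, 0 ≤ P u v) {k : ℕ}
    (ξ : Fin (k + 1) → V) : 0 ≤ pathWeight P ξ :=
  prod_nonneg fun _ _ => hP _ _

theorem Fin.cons_natCast_succ {k m : ℕ} (hm : m ≤ k) (a : V) (η : Fin (k + 1) → V) :
    (Fin.cons a η : Fin (k + 2) → V) (m + 1 : ℕ) = η m := by
  have : ((m + 1 : ℕ) : Fin (k + 2)) = (m : Fin (k + 1)).succ := by
    ext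
    simp only [Fin.val_natCast, Fin.val_succ, Nat.mod_eq_of_lt (show m < k + 1 by omega),
      Nat.mod_eq_of_lt (show m + 1 < k + 2 by omega)]
  rw [this, Fin.cons_succ]

theorem pathWeight_cons {P : Matrix V V ℝ} {k : ℕ} (a : V) (η : Fin (k + 1) → V) :
    pathWeight P (Fin.cons a η : Fin (k + 2) → V) = P a (η 0) * pathWeight P η := by
  unfold pathWeight
  rw [prod_range_succ', mul_comm]
  congr 1
  refine prod_congr rfl fun l hl => ?_
  rw [mem_range] at hl
  rw [← Nat.cast_succ, ← Nat.cast_succ, Fin.cons_natCast_succ (by omega),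
    Fin.cons_natCast_succ (by omega), Nat.cast_succ]

section ExitPaths

variable [Fintype V]

noncomputable def exitPaths (W : Finset V) (w : V) (k : ℕ) : Finset (Fin (k + 1) → V) :=
  Finset.univ.filter (fun ξ : Fin (k + 1) → V =>
      ξ 0 = w ∧ (∀ l : ℕ, 0 < l → l < k → ξ l ∈ W) ∧ ξ k ∉ W)

/-- `exitSum P W f w k = E_w[f(X_T); T = k]`, where `T ≥ 1` is the first time the chain started
at `w` is outside `W`. -/
noncomputable def exitSum (P : Matrix V V ℝ) (W : Finset V) (f : V → ℝ) (w : V) (k : ℕ) : ℝ :=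
  ∑ ξ ∈ exitPaths W w k, pathWeight P ξ * f (ξ k)

variable {P : Matrix V V ℝ} {W : Finset V}

theorem exitSum_nonneg (hP : ∀ u v, 0 ≤ P u v) {f : V → ℝ} (hf : ∀ u, 0 ≤ f u) (w : V) (k : ℕ) :
    0 ≤ exitSum P W f w k :=
  sum_nonneg fun ξ _ => mul_nonneg (pathWeight_nonneg hP ξ) (hf _)

theorem mul_phi_le_exitSum (hP : ∀ u v, 0 ≤ P u v) {f : V → ℝ} {c : ℝ} (hc : ∀ u ∉ W, c ≤ f u)
    (w : V) (k : ℕ) : c * phi P W w k ≤ exitSum P W f w k := by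
  unfold phi exitSum
  rw [mul_sum]
  refine sum_le_sum fun ξ hξ => ?_
  rw [mul_comm]
  exact mul_le_mul_of_nonneg_left (hc _ (mem_filter.1 hξ).2.2.2) (pathWeight_nonneg hP ξ)

theorem mem_exitPaths {w : V} {k : ℕ} {ξ : Fin (k + 1) → V} :
    ξ ∈ exitPaths W w k ↔ ξ 0 = w ∧ (∀ l : ℕ, 0 < l → l < k → ξ l ∈ W) ∧ ξ k ∉ W := by
  simp [exitPaths]

theorem cons_mem_exitPaths_succ {k : ℕ} (hk : 1 ≤ k) {a w : V} {η : Fin (k + 1) → V} :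
    (Fin.cons a η : Fin (k + 2) → V) ∈ exitPaths W w (k + 1) ↔
      a = w ∧ η 0 ∈ W ∧ η ∈ exitPaths W (η 0) k := by
  have hmid : (∀ l : ℕ, 0 < l → l < k + 1 → (Fin.cons a η : Fin (k + 2) → V) l ∈ W) ↔
      η 0 ∈ W ∧ ∀ l : ℕ, 0 < l → l < k → η l ∈ W := by
    constructor
    · intro h
      refine ⟨?_, fun l hl hlk => ?_⟩
      · have h1 := h (0 + 1) one_pos (by omega)
        rwa [Fin.cons_natCast_succ (Nat.zero_le k), Nat.cast_zero] at h1
      · have hl1 := h (l + 1) (by omega) (by omega)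
        rwa [Fin.cons_natCast_succ hlk.le] at hl1
    · rintro ⟨h0, h⟩ (_ | l) hl hlk
      · omega
      · rw [Fin.cons_natCast_succ (by omega)]
        rcases l with _ | l
        · rwa [Nat.cast_zero]
        · exact h _ (by omega) (by omega)
  simp only [mem_exitPaths, Fin.cons_zero, hmid, Fin.cons_natCast_succ le_rfl, true_and, and_assoc]

theorem exitSum_succ {k : ℕ} (hk : 1 ≤ k) (f : V → ℝ) (w : V) :
    exitSum P W f w (k + 1) = ∑ u ∈ W, P w u * exitSum P W f u k := by
  have hfirst : ∀ ξ ∈ exitPaths W w (k + 1),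
      ξ 0 = w ∧ Fin.tail ξ 0 ∈ W ∧ Fin.tail ξ ∈ exitPaths W (Fin.tail ξ 0) k := by
    intro ξ hξ
    rwa [← Fin.cons_self_tail ξ, cons_mem_exitPaths_succ hk] at hξ
  rw [exitSum, ← sum_fiberwise_of_maps_to (g := fun ξ => Fin.tail ξ 0)
    fun ξ hξ => (hfirst ξ hξ).2.1]
  refine sum_congr rfl fun u hu => ?_
  rw [exitSum, mul_sum]
  symm
  refine sum_nbij' (fun η => (Fin.cons w η : Fin (k + 2) → V)) Fin.tail (fun η hη => ?_)
    (fun ξ hξ => ?_) (fun η _ => Fin.tail_cons _ _) (fun ξ hξ => ?_) (fun η hη => ?_)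
  · have hη0 : η 0 = u := (mem_exitPaths.1 hη).1
    rw [mem_filter, cons_mem_exitPaths_succ hk, Fin.tail_cons, hη0]
    exact ⟨⟨rfl, hu, hη⟩, rfl⟩
  · obtain ⟨hξW, rfl⟩ := mem_filter.1 hξ
    exact (hfirst ξ hξW).2.2
  · conv_rhs => rw [← Fin.cons_self_tail ξ, (hfirst ξ (mem_filter.1 hξ).1).1]
  · rw [pathWeight_cons, Fin.cons_natCast_succ le_rfl, (mem_exitPaths.1 hη).1]
    ring

theorem exitSum_one {f : V → ℝ} (hf : ∀ u ∈ W, f u = 0) (w : V) :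
    exitSum P W f w 1 = (P *ᵥ f) w := by
  have hsupp : ∀ v ∈ univ, P w v * f v ≠ 0 → v ∉ W := fun v _ hv hvW =>
    hv (by rw [hf v hvW, mul_zero])
  rw [mulVec, dotProduct, ← sum_filter_of_ne hsupp, exitSum]
  refine sum_nbij' (fun ξ => ξ (1 : ℕ)) (fun v => ![w, v]) (fun ξ hξ => ?_) (fun v hv => ?_)
    (fun ξ hξ => ?_) (fun v _ => rfl) (fun ξ hξ => ?_)
  · simpa using (mem_exitPaths.1 hξ).2.2
  · refine mem_exitPaths.2 ⟨rfl, fun l hl hl1 => absurd hl1 (by omega), ?_⟩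
    simpa using hv
  · ext i
    fin_cases i
    · exact (mem_exitPaths.1 hξ).1.symm
    · rfl
  · simp [pathWeight, (mem_exitPaths.1 hξ).1]

end ExitPaths

section Invariance

variable [Fintype V] {P : Matrix V V ℝ} {π : V → ℝ} {W : Finset V}

theorem sum_mul_mulVec_eq_sum_compl (hπ : π ᵥ* P = π) {τ : V → ℝ} (hτ0 : ∀ u ∈ W, τ u = 0)
    (hτ1 : ∀ u ∉ W, τ u = 1 + (P *ᵥ τ) u) :
    ∑ w ∈ W, π w * (P *ᵥ τ) w = ∑ v ∈ Wᶜ, π v := by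
  have hinv : π ⬝ᵥ (P *ᵥ τ) = π ⬝ᵥ τ := by rw [dotProduct_mulVec, hπ]
  have hW : ∑ u ∈ W, π u * τ u = 0 := sum_eq_zero fun u hu => by rw [hτ0 u hu, mul_zero]
  have hWc : ∑ u ∈ Wᶜ, π u * τ u = ∑ u ∈ Wᶜ, π u + ∑ u ∈ Wᶜ, π u * (P *ᵥ τ) u := by
    rw [← sum_add_distrib]
    exact sum_congr rfl fun u hu => by rw [hτ1 u (mem_compl.1 hu)]; ring
  simp only [dotProduct, ← sum_add_sum_compl W] at hinv
  linarith

theorem sum_mul_exitSum_le_sum_mul_exitSum_one (hP : ∀ u v, 0 ≤ P u v) (hπ0 : ∀ v, 0 ≤ π v)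
    (hπ : π ᵥ* P = π) {f : V → ℝ} (hf : ∀ u, 0 ≤ f u) {k : ℕ} (hk : 1 ≤ k) :
    ∑ w ∈ W, π w * exitSum P W f w k ≤ ∑ w ∈ W, π w * exitSum P W f w 1 := by
  have hsub : ∀ u, ∑ w ∈ W, π w * P w u ≤ π u := fun u =>
    calc ∑ w ∈ W, π w * P w u ≤ ∑ w, π w * P w u :=
          sum_le_univ_sum_of_nonneg fun w => mul_nonneg (hπ0 w) (hP w u)
      _ = π u := congrFun hπ u
  induction k, hk using Nat.le_induction with
  | base => exact le_rfl
  | succ k hk ih =>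
    calc ∑ w ∈ W, π w * exitSum P W f w (k + 1)
        = ∑ u ∈ W, (∑ w ∈ W, π w * P w u) * exitSum P W f u k := by
          simp only [exitSum_succ hk, mul_sum, sum_mul, mul_assoc]
          exact sum_comm
      _ ≤ ∑ u ∈ W, π u * exitSum P W f u k :=
          sum_le_sum fun u _ => mul_le_mul_of_nonneg_right (hsub u) (exitSum_nonneg hP hf u k)
      _ ≤ ∑ w ∈ W, π w * exitSum P W f w 1 := ih

theorem sum_mul_exitProbAux_le (hπ0 : ∀ v, 0 ≤ π v) (t : ℕ) :
    (∑ w ∈ W, π w) * exitProbAux P π W t ≤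
      ∑ w ∈ W, π w * ((1 / t) * ∑ k ∈ Icc 1 t, phi P W w k) := by
  rw [sum_mul]
  refine sum_le_sum fun w hw => ?_
  rcases (hπ0 w).eq_or_lt with hw0 | hwpos
  · rw [← hw0, zero_mul, zero_mul]
  · have hmem : w ∈ W.filter fun w => 0 < π w := mem_filter.2 ⟨hw, hwpos⟩
    rw [exitProbAux, dif_pos ⟨w, hmem⟩]
    exact mul_le_mul_of_nonneg_left (inf'_le _ hmem) hwpos.le

theorem sum_mul_exitProbAux_mul_le (hP : ∀ u v, 0 ≤ P u v) (hπ0 : ∀ v, 0 ≤ π v)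
    (hπ : π ᵥ* P = π) {f : V → ℝ} (hf : ∀ u, 0 ≤ f u) {c : ℝ} (hc0 : 0 ≤ c)
    (hc : ∀ u ∉ W, c ≤ f u) {t : ℕ} (ht : 1 ≤ t) :
    (∑ w ∈ W, π w) * exitProbAux P π W t * c ≤ ∑ w ∈ W, π w * exitSum P W f w 1 := by
  calc (∑ w ∈ W, π w) * exitProbAux P π W t * c
      ≤ (∑ w ∈ W, π w * ((1 / t) * ∑ k ∈ Icc 1 t, phi P W w k)) * c :=
        mul_le_mul_of_nonneg_right (sum_mul_exitProbAux_le hπ0 t) hc0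
    _ = (1 / t) * ∑ k ∈ Icc 1 t, ∑ w ∈ W, π w * (c * phi P W w k) := by
        simp only [mul_sum, sum_mul]
        rw [sum_comm]
        exact sum_congr rfl fun _ _ => sum_congr rfl fun _ _ => by ring
    _ ≤ (1 / t) * ∑ k ∈ Icc 1 t, ∑ w ∈ W, π w * exitSum P W f w k := by
        gcongr with k hk w hw
        · exact hπ0 w
        · exact mul_phi_le_exitSum hP hc w k
    _ ≤ (1 / t) * ∑ k ∈ Icc 1 t, ∑ w ∈ W, π w * exitSum P W f w 1 := by
        refine mul_le_mul_of_nonneg_left (sum_le_sum fun k hk => ?_) (by positivity)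
        exact sum_mul_exitSum_le_sum_mul_exitSum_one hP hπ0 hπ hf (mem_Icc.1 hk).1
    _ = ∑ w ∈ W, π w * exitSum P W f w 1 := by
        rw [sum_const, Nat.card_Icc, nsmul_eq_mul]
        field_simp
        simp

end Invariance

theorem stmt1_general [Fintype V] (Pt : Matrix V V ℝ) (pit : V → ℝ) (W : Finset V)
    (hPt : IsStochastic Pt) (hpit : InvariantProb Pt pit)
    (tau : V → ℝ) (htau_nonneg : ∀ u, 0 ≤ tau u)
    (htau0 : ∀ u ∈ W, tau u = 0)
    (htau1 : ∀ u ∉ W, tau u = 1 + ∑ v, Pt u v * tau v) :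
    (∑ w ∈ W, pit w) * exitProb Pt pit W * entranceTime tau W ≤ 1 := by
  obtain ⟨hP, -⟩ := hPt
  obtain ⟨hπ0, hπ1, hπ⟩ := hpit
  have hτ_bdd : BddBelow {x | ∃ u, u ∉ W ∧ x = tau u} :=
    ⟨0, by rintro _ ⟨u, -, rfl⟩; exact htau_nonneg u⟩
  have hτstar0 : 0 ≤ entranceTime tau W :=
    Real.sInf_nonneg (by rintro _ ⟨u, -, rfl⟩; exact htau_nonneg u)
  have hτstar : ∀ u ∉ W, entranceTime tau W ≤ tau u := fun u hu => csInf_le hτ_bdd ⟨u, hu, rfl⟩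
  have hbound : ∀ t, 1 ≤ t →
      (∑ w ∈ W, pit w) * exitProbAux Pt pit W t * entranceTime tau W ≤ 1 := fun t ht =>
    calc _ ≤ ∑ w ∈ W, pit w * exitSum Pt W tau w 1 :=
          sum_mul_exitProbAux_mul_le hP hπ0 (funext hπ) htau_nonneg hτstar0 hτstar ht
      _ = ∑ w ∈ W, pit w * (Pt *ᵥ tau) w := by simp only [exitSum_one htau0]
      _ = ∑ v ∈ Wᶜ, pit v := sum_mul_mulVec_eq_sum_compl (funext hπ) htau0 htau1
      _ ≤ 1 := hπ1 ▸ sum_le_univ_sum_of_nonneg hπ0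
  have hc : 0 ≤ (∑ w ∈ W, pit w) * entranceTime tau W :=
    mul_nonneg (sum_nonneg fun w _ => hπ0 w) hτstar0
  rw [mul_right_comm, exitProb, ← smul_eq_mul, ← Real.sSup_smul_of_nonneg hc]
  refine Real.sSup_le ?_ zero_le_one
  rintro _ ⟨_, ⟨t, ht, rfl⟩, rfl⟩
  simp only [smul_eq_mul]
  linarith [hbound t ht]

/-- Lemma 2 of the paper: `pit(W) · γ̃_W · τ*_W ≤ 1`. -/
theorem stmt1 [Fintype V] (Pt : Matrix V V ℝ) (pit : V → ℝ) (W : Finset V)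
    (hPt : IsStochastic Pt) (hpit : InvariantProb Pt pit) (hW : W ≠ Finset.univ)
    (tau : V → ℝ) (htau_nonneg : ∀ u, 0 ≤ tau u)
    (htau0 : ∀ u ∈ W, tau u = 0)
    (htau1 : ∀ u ∉ W, tau u = 1 + ∑ v, Pt u v * tau v) :
    (∑ w ∈ W, pit w) * exitProb Pt pit W * entranceTime tau W ≤ 1 :=
  stmt1_general Pt pit W hPt hpit tau htau_nonneg htau0 htau1
end

section
/- Let Q be a stochastic matrix on a finite set 𝒱, μ a probability vector on 𝒱, β ∈ (0,1), and suppose P := (1−β)·Q + β·𝟙μ is irreducible, where 𝟙μ is the matrix with entry (𝟙μ)_{uv} = μ_v. Let π be the invariant probability vector of P and let W ⊆ 𝒱 be nonempty with W ≠ 𝒱. Then the entrance time satisfies τ*_W ≥ β·Σ_{v∈𝒱} μ_v τ^v_W ≥ β/π(W) − 1, where π(W) := Σ_{w∈W} π_w. -/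
open scoped Classical BigOperators
open Finset

variable {V : Type*}

/-
Off `W` the hitting times satisfy `τ = 1 + Pτ`, and `P ≥ β 𝟙μ` entrywise; since `τ ≥ 0`
(minimum principle) this gives `τ_u ≥ 1 + β μτ` for `u ∉ W`. For the second bound put
`r := 1 + Pτ`, the expected return time. Invariance of `π` turns `π r = 1 + π τ` into Kac's
formula `∑_{u ∈ W} π_u r_u = 1`. Writing `r = 1 + (1-β) Qτ + β μτ` and using `τ ≤ r`, the
maximum `R` of `r` satisfies `R ≤ 1 + (1-β) R + β μτ`, i.e. `β R ≤ 1 + β μτ`; hence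
`β = β ∑_{u ∈ W} π_u r_u ≤ π(W) (1 + β μτ)`.
-/

def IsHittingTime [Fintype V] (P : Matrix V V ℝ) (W : Finset V) (tau : V → ℝ) : Prop :=
  (∀ u ∈ W, tau u = 0) ∧ ∀ u ∉ W, tau u = 1 + ∑ v, P u v * tau v

theorem le_entranceTime {tau : V → ℝ} {W : Finset V} {a : ℝ} (hW : ∃ u, u ∉ W)
    (h : ∀ u ∉ W, a ≤ tau u) : a ≤ entranceTime tau W := by
  obtain ⟨u₀, hu₀⟩ := hW
  refine le_csInf ⟨tau u₀, u₀, hu₀, rfl⟩ ?_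
  rintro x ⟨u, hu, rfl⟩
  exact h u hu

section Stochastic

variable [Fintype V] {P Q : Matrix V V ℝ}

theorem IsStochastic.sum_mul_le (hP : IsStochastic P) (u : V) {f : V → ℝ} {M : ℝ}
    (hf : ∀ v, f v ≤ M) : ∑ v, P u v * f v ≤ M :=
  calc ∑ v, P u v * f v ≤ ∑ v, P u v * M :=
        sum_le_sum fun v _ => mul_le_mul_of_nonneg_left (hf v) (hP.1 u v)
    _ = M := by rw [← sum_mul, hP.2 u, one_mul]

theorem IsStochastic.le_sum_mul (hP : IsStochastic P) (u : V) {f : V → ℝ} {m : ℝ}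
    (hf : ∀ v, m ≤ f v) : m ≤ ∑ v, P u v * f v :=
  calc m = ∑ v, P u v * m := by rw [← sum_mul, hP.2 u, one_mul]
    _ ≤ ∑ v, P u v * f v := sum_le_sum fun v _ => mul_le_mul_of_nonneg_left (hf v) (hP.1 u v)

theorem IsHittingTime.nonneg {W : Finset V} {tau : V → ℝ} (hP : IsStochastic P)
    (hτ : IsHittingTime P W tau) (v : V) : 0 ≤ tau v := by
  obtain ⟨u₀, -, hmin⟩ := exists_min_image univ tau ⟨v, mem_univ v⟩
  have hu₀ : 0 ≤ tau u₀ := by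
    by_cases hu₀W : u₀ ∈ W
    · exact (hτ.1 u₀ hu₀W).ge
    · have := hP.le_sum_mul u₀ fun w => hmin w (mem_univ w)
      linarith [hτ.2 u₀ hu₀W]
  exact hu₀.trans (hmin v (mem_univ v))

/-- Kac's formula. -/
theorem IsHittingTime.sum_mul_return_eq_one {W : Finset V} {tau pi : V → ℝ}
    (hτ : IsHittingTime P W tau) (hpi : InvariantProb P pi) :
    ∑ u ∈ W, pi u * (1 + ∑ v, P u v * tau v) = 1 := by
  have hinv : ∑ u, pi u * ∑ v, P u v * tau v = ∑ v, pi v * tau v := by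
    simp_rw [mul_sum, ← mul_assoc]
    rw [sum_comm]
    exact sum_congr rfl fun v _ => by rw [← sum_mul, hpi.2.2 v]
  have hoff : ∑ u ∈ Wᶜ, pi u * (1 + ∑ v, P u v * tau v) = ∑ u ∈ Wᶜ, pi u * tau u :=
    sum_congr rfl fun u hu => by rw [← hτ.2 u (mem_compl.1 hu)]
  have hon : ∑ u ∈ W, pi u * tau u = 0 :=
    sum_eq_zero fun u hu => by rw [hτ.1 u hu, mul_zero]
  have htotal : ∑ u, pi u * (1 + ∑ v, P u v * tau v) = 1 + ∑ v, pi v * tau v := by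
    simp only [mul_add, mul_one, sum_add_distrib, hpi.2.1, hinv]
  rw [← sum_add_sum_compl W, hoff, ← sum_add_sum_compl W fun u => pi u * tau u, hon] at htotal
  linarith

variable {mu : V → ℝ} {β : ℝ}

theorem isStochastic_mixture (hQ : IsStochastic Q) (hmu : (∀ v, 0 ≤ mu v) ∧ ∑ v, mu v = 1)
    (hβ0 : 0 ≤ β) (hβ1 : β ≤ 1) (hPdef : ∀ u v, P u v = (1 - β) * Q u v + β * mu v) :
    IsStochastic P := by
  refine ⟨fun u v => ?_, fun u => ?_⟩
  · rw [hPdef]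
    have := hQ.1 u v
    have := hmu.1 v
    positivity
  · simp only [hPdef, sum_add_distrib, ← mul_sum, hQ.2 u, hmu.2]
    ring

theorem sum_mixture_mul (hPdef : ∀ u v, P u v = (1 - β) * Q u v + β * mu v) (u : V)
    (f : V → ℝ) :
    ∑ v, P u v * f v = (1 - β) * ∑ v, Q u v * f v + β * ∑ v, mu v * f v := by
  simp only [hPdef, add_mul, sum_add_distrib, mul_sum, mul_assoc]

theorem mul_sum_mul_le_sum_mixture_mul (hQ : IsStochastic Q) (hβ1 : β ≤ 1)
    (hPdef : ∀ u v, P u v = (1 - β) * Q u v + β * mu v) (u : V) {f : V → ℝ}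
    (hf : ∀ v, 0 ≤ f v) : β * ∑ v, mu v * f v ≤ ∑ v, P u v * f v := by
  rw [sum_mixture_mul hPdef]
  have := hQ.le_sum_mul u hf
  nlinarith

theorem IsHittingTime.le_return {W : Finset V} {tau : V → ℝ} (hP : IsStochastic P)
    (hτ : IsHittingTime P W tau) (v : V) : tau v ≤ 1 + ∑ w, P v w * tau w := by
  by_cases hv : v ∈ W
  · rw [hτ.1 v hv]
    linarith [hP.le_sum_mul v (hτ.nonneg hP)]
  · exact (hτ.2 v hv).le

theorem mul_return_le_of_le_return (hQ : IsStochastic Q) (hβ0 : 0 ≤ β) (hβ1 : β ≤ 1)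
    (hPdef : ∀ u v, P u v = (1 - β) * Q u v + β * mu v) {f : V → ℝ}
    (hf : ∀ v, f v ≤ 1 + ∑ w, P v w * f w) (u : V) :
    β * (1 + ∑ v, P u v * f v) ≤ 1 + β * ∑ v, mu v * f v := by
  set r : V → ℝ := fun v => 1 + ∑ w, P v w * f w
  obtain ⟨u₀, -, hmax⟩ := exists_max_image univ r ⟨u, mem_univ u⟩
  have hQf : ∑ w, Q u₀ w * f w ≤ r u₀ :=
    hQ.sum_mul_le u₀ fun w => (hf w).trans (hmax w (mem_univ w))
  have hr : r u₀ = 1 + (1 - β) * ∑ w, Q u₀ w * f w + β * ∑ w, mu w * f w := by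
    simp only [r, sum_mixture_mul hPdef, add_assoc]
  have hmaxr : β * r u₀ ≤ 1 + β * ∑ w, mu w * f w := by nlinarith
  nlinarith [hmax u (mem_univ u)]

end Stochastic

theorem stmt9_general [Fintype V] (Q P : Matrix V V ℝ) (mu pi : V → ℝ) (β : ℝ)
    (W : Finset V)
    (hQ : IsStochastic Q) (hmu : (∀ v, 0 ≤ mu v) ∧ ∑ v, mu v = 1)
    (hβ : 0 < β ∧ β < 1)
    (hPdef : ∀ u v, P u v = (1 - β) * Q u v + β * mu v)
    (hpi : InvariantProb P pi)
    (hW2 : W ≠ Finset.univ)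
    (tau : V → ℝ) (htau0 : ∀ u ∈ W, tau u = 0)
    (htau1 : ∀ u ∉ W, tau u = 1 + ∑ v, P u v * tau v) :
    β * (∑ v, mu v * tau v) ≤ entranceTime tau W ∧
    β / (∑ w ∈ W, pi w) - 1 ≤ β * (∑ v, mu v * tau v) := by
  obtain ⟨hβ0, hβ1⟩ := hβ
  have hP := isStochastic_mixture hQ hmu hβ0.le hβ1.le hPdef
  have hτ : IsHittingTime P W tau := ⟨htau0, htau1⟩
  have hτ0 := hτ.nonneg hP
  refine ⟨le_entranceTime ?_ fun u hu => ?_, ?_⟩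
  · by_contra! h
    exact hW2 (eq_univ_iff_forall.2 h)
  · rw [htau1 u hu]
    linarith [mul_sum_mul_le_sum_mixture_mul hQ hβ1.le hPdef u hτ0]
  · set S := ∑ v, mu v * tau v
    have hπW : β ≤ (∑ w ∈ W, pi w) * (1 + β * S) :=
      calc β = ∑ u ∈ W, pi u * (β * (1 + ∑ v, P u v * tau v)) := by
            simp only [mul_left_comm _ β, ← mul_sum, hτ.sum_mul_return_eq_one hpi, mul_one]
        _ ≤ ∑ u ∈ W, pi u * (1 + β * S) := sum_le_sum fun u _ =>
            mul_le_mul_of_nonneg_left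
              (mul_return_le_of_le_return hQ hβ0.le hβ1.le hPdef (hτ.le_return hP) u) (hpi.1 u)
        _ = (∑ w ∈ W, pi w) * (1 + β * S) := by rw [sum_mul]
    have hπW0 : 0 < ∑ w ∈ W, pi w := by
      refine (sum_nonneg fun w _ => hpi.1 w).lt_of_ne fun h => ?_
      rw [← h, zero_mul] at hπW
      linarith
    rw [sub_le_iff_le_add, div_le_iff₀ hπW0]
    linarith

/-- for irreducible `P = (1-β) Q + β 𝟙μ`, the entrance time satisfies
`τ*_W ≥ β ∑_v μ_v τ^v_W ≥ β/π(W) - 1`. -/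
theorem stmt9 [Fintype V] (Q P : Matrix V V ℝ) (mu pi : V → ℝ) (β : ℝ)
    (W : Finset V)
    (hQ : IsStochastic Q) (hmu : (∀ v, 0 ≤ mu v) ∧ ∑ v, mu v = 1)
    (hβ : 0 < β ∧ β < 1)
    (hPdef : ∀ u v, P u v = (1 - β) * Q u v + β * mu v)
    (hirr : IrreducibleMatrix P) (hpi : InvariantProb P pi)
    (hW1 : W.Nonempty) (hW2 : W ≠ Finset.univ)
    (tau : V → ℝ) (htau0 : ∀ u ∈ W, tau u = 0)
    (htau1 : ∀ u ∉ W, tau u = 1 + ∑ v, P u v * tau v) :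
    β * (∑ v, mu v * tau v) ≤ entranceTime tau W ∧
    β / (∑ w ∈ W, pi w) - 1 ≤ β * (∑ v, mu v * tau v) :=
  stmt9_general Q P mu pi β W hQ hmu hβ hPdef hpi hW2 tau htau0 htau1
end

section
/- Let 𝒢 = (𝒱,ℰ) be a connected undirected graph with n := |𝒱| nodes, degrees d_v ≥ 1, and average degree d̄ := (1/n)·Σ_v d_v, and let π be the probability vector π_v = d_v/(n·d̄). Let ℱ ⊆ ℰ and suppose the directed graph 𝒢̃ = (𝒱, ℰ∖ℱ) is strongly connected with out-degrees d̃_v ≥ 1; let P̃ := (I + Q̃)/2 where Q̃_{uv} = 1/d̃_u if (u,v) ∈ ℰ∖ℱ and Q̃_{uv} = 0 otherwise, and let π̃ be the unique invariant probability vector of P̃. Then for every y ∈ ℝ^𝒱, setting ȳ := (1/n)·Σ_v y_v and ỹ := ( Σ_v π̃_v y_v/d̃_v ) / ( Σ_v π̃_v/d̃_v ), one has |ỹ − ȳ| ≤ 2·d̄·‖y‖_∞·( |ℱ|/|ℰ| + ‖π̃ − π‖ ). -/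
open scoped Classical BigOperators
open Finset

variable {V : Type*}

/-!
With weights `w v = π̃ v / d̃ v`, `ỹ` is the `w`-weighted mean of `y`, whereas `π v / d v = 1 / |E|`
is constant, so undoing both perturbations (`π̃ → π`, `d̃ → d`) gives exactly `ȳ`.
Let `y` take values in `[a, b]`, `R := (b - a) (|F| + |E| ‖π̃ - π‖) / n` and `c := ȳ + R`.
If `b ≤ c` then `ỹ ≤ c` is trivial; otherwise it reads `∑ w v (y v - c) ≤ 0`. Expanding `w`
around `1 / |E|` splits this sum into `-n R / |E|`, a `π̃ - π` term of at most
`‖π̃ - π‖ (b - a)` and a `d - d̃` term of at most `|F| (b - a) / |E|`: since `d̃ v ≥ 1`, the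
values `(y v - c) / d̃ v` stay in `[a - c, b - c]`, an interval containing `0`.
The same bound for `-y` gives the other direction, and `b - a = 2 ‖y‖_∞`.
-/

lemma sum_card_filter_mem [Fintype V] (A : Finset (V × V)) :
    ∑ v, #{u | (v, u) ∈ A} = #A := by
  calc ∑ v, #{u | (v, u) ∈ A} = ∑ v, ∑ u, if (v, u) ∈ A then 1 else 0 := by
        simp only [card_filter]
    _ = ∑ e : V × V, if e ∈ A then 1 else 0 := (Fintype.sum_prod_type' _).symm
    _ = #A := by simp

lemma sum_sub_mul_le_tvDist_mul [Fintype V] {p q f : V → ℝ} {a b : ℝ}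
    (hpq : ∑ v, p v = ∑ v, q v) (hf : ∀ v, f v ∈ Set.Icc a b) :
    ∑ v, (p v - q v) * f v ≤ tvDist p q * (b - a) := by
  have hf' : ∀ v, |f v - (a + b) / 2| ≤ (b - a) / 2 := fun v => by
    rw [abs_le]; constructor <;> linarith [(hf v).1, (hf v).2]
  calc ∑ v, (p v - q v) * f v = ∑ v, (p v - q v) * (f v - (a + b) / 2) := by
        simp only [mul_sub, sum_sub_distrib, ← sum_mul, hpq, sub_self, zero_mul, sub_zero]
    _ ≤ ∑ v, |p v - q v| * ((b - a) / 2) := sum_le_sum fun v _ =>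
      calc (p v - q v) * (f v - (a + b) / 2) ≤ |p v - q v| * |f v - (a + b) / 2| := by
            rw [← abs_mul]; exact le_abs_self _
        _ ≤ |p v - q v| * ((b - a) / 2) := by gcongr; exact hf' v
    _ = tvDist p q * (b - a) := by rw [tvDist, ← sum_mul]; ring

lemma div_mem_Icc_of_one_le {α β z t : ℝ} (hz : z ∈ Set.Icc α β) (hα : α ≤ 0) (hβ : 0 ≤ β)
    (ht : 1 ≤ t) : z / t ∈ Set.Icc α β := by
  have ht0 : 0 < t := by linarith
  constructor
  · rw [le_div_iff₀ ht0]; nlinarith [hz.1]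
  · rw [div_le_iff₀ ht0]; nlinarith [hz.2]

section WeightedMean

variable [Fintype V] {d dt pi pit : V → ℝ}

lemma sum_div_mul_eq (hdt : ∀ v, dt v ≠ 0) (hD : ∑ v, d v ≠ 0)
    (hpi : ∀ v, pi v = d v / ∑ u, d u) (z : V → ℝ) :
    ∑ v, pit v / dt v * z v =
      (∑ v, z v + ∑ v, (d v - dt v) * (z v / dt v)) / ∑ v, d v +
        ∑ v, (pit v - pi v) * (z v / dt v) := by
  rw [add_div, sum_div, sum_div, ← sum_add_distrib, ← sum_add_distrib]
  refine sum_congr rfl fun v _ => ?_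
  rw [hpi]
  field_simp [hdt v]
  ring

lemma sum_div_mul_sub_le [Nonempty V] {y : V → ℝ} {a b c : ℝ}
    (hdt : ∀ v, 1 ≤ dt v) (hdtd : ∀ v, dt v ≤ d v) (hpi : ∀ v, pi v = d v / ∑ u, d u)
    (hpit1 : ∑ v, pit v = 1) (hy : ∀ v, y v ∈ Set.Icc a b) (hac : a ≤ c) (hcb : c ≤ b) :
    ∑ v, pit v / dt v * (y v - c) ≤
      (∑ v, y v - Fintype.card V * c +
        (b - a) * (∑ v, (d v - dt v) + (∑ v, d v) * tvDist pit pi)) / ∑ v, d v := by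
  have hD : 0 < ∑ v, d v := sum_pos (fun v _ => by linarith [hdt v, hdtd v]) univ_nonempty
  have hpi1 : ∑ v, pi v = 1 := by
    simp only [hpi, ← sum_div]; exact div_self hD.ne'
  have hζ : ∀ v, (y v - c) / dt v ∈ Set.Icc (a - c) (b - c) := fun v =>
    div_mem_Icc_of_one_le ⟨by linarith [(hy v).1], by linarith [(hy v).2]⟩
      (by linarith) (by linarith) (hdt v)
  have hlost : ∑ v, (d v - dt v) * ((y v - c) / dt v) ≤ ∑ v, (d v - dt v) * (b - a) :=
    sum_le_sum fun v _ => mul_le_mul_of_nonneg_left (by linarith [(hζ v).2])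
      (sub_nonneg.2 (hdtd v))
  have hmoved : ∑ v, (pit v - pi v) * ((y v - c) / dt v) ≤ tvDist pit pi * (b - a) := by
    simpa using sum_sub_mul_le_tvDist_mul (hpit1.trans hpi1.symm) hζ
  have hsum : ∑ v, (y v - c) = ∑ v, y v - Fintype.card V * c := by
    rw [sum_sub_distrib, sum_const, card_univ, nsmul_eq_mul]
  rw [← sum_mul] at hlost
  rw [sum_div_mul_eq (fun v => (by linarith [hdt v] : 0 < dt v).ne') hD.ne' hpi, hsum,
    div_add' _ _ _ hD.ne', div_le_div_iff_of_pos_right hD]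
  linarith [mul_le_mul_of_nonneg_left hmoved hD.le]

lemma weightedMean_sub_mean_le [Nonempty V] {y : V → ℝ} {a b : ℝ}
    (hdt : ∀ v, 1 ≤ dt v) (hdtd : ∀ v, dt v ≤ d v) (hpi : ∀ v, pi v = d v / ∑ u, d u)
    (hpit0 : ∀ v, 0 ≤ pit v) (hpit1 : ∑ v, pit v = 1) (hy : ∀ v, y v ∈ Set.Icc a b) :
    (∑ v, pit v * y v / dt v) / (∑ v, pit v / dt v) - (∑ v, y v) / Fintype.card V ≤
      (b - a) * (∑ v, (d v - dt v) + (∑ v, d v) * tvDist pit pi) / Fintype.card V := by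
  set n : ℝ := (Fintype.card V : ℝ)
  set ybar := (∑ v, y v) / n
  set R := (b - a) * (∑ v, (d v - dt v) + (∑ v, d v) * tvDist pit pi) / n
  have hw : ∀ v, 0 ≤ pit v / dt v := fun v => div_nonneg (hpit0 v) (by linarith [hdt v])
  have hn : 0 < n := by simp only [n]; exact_mod_cast Fintype.card_pos
  have hS : 0 < ∑ v, pit v / dt v := by
    obtain ⟨v, -, hv⟩ := exists_lt_of_sum_lt (s := univ) (f := fun _ => (0 : ℝ)) (g := pit)
      (by simp [hpit1])
    exact sum_pos' (fun v _ => hw v) ⟨v, mem_univ v, div_pos hv (by linarith [hdt v])⟩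
  have hybar : ybar ∈ Set.Icc a b := by
    constructor
    · rw [le_div_iff₀ hn]
      simpa [n, mul_comm] using card_nsmul_le_sum univ y a fun v _ => (hy v).1
    · rw [div_le_iff₀ hn]
      simpa [n, mul_comm] using sum_le_card_nsmul univ y b fun v _ => (hy v).2
  have hR : 0 ≤ R := by
    have : 0 ≤ b - a := sub_nonneg.2 (hybar.1.trans hybar.2)
    have : 0 ≤ ∑ v, d v := sum_nonneg fun v _ => by linarith [hdt v, hdtd v]
    have : 0 ≤ ∑ v, (d v - dt v) := sum_nonneg fun v _ => sub_nonneg.2 (hdtd v)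
    have : 0 ≤ tvDist pit pi := by unfold tvDist; positivity
    positivity
  rw [sub_le_iff_le_add', div_le_iff₀ hS, ← sub_nonpos, mul_sum, ← sum_sub_distrib]
  rcases le_or_gt b (ybar + R) with hbc | hcb
  · refine sum_nonpos fun v _ => ?_
    rw [mul_div_right_comm, mul_comm (ybar + R), ← mul_sub]
    exact mul_nonpos_of_nonneg_of_nonpos (hw v) (by linarith [(hy v).2])
  · calc ∑ v, (pit v * y v / dt v - (ybar + R) * (pit v / dt v))
        = ∑ v, pit v / dt v * (y v - (ybar + R)) := sum_congr rfl fun v _ => by ring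
      _ ≤ _ := sum_div_mul_sub_le hdt hdtd hpi hpit1 hy (by linarith [hybar.1]) hcb.le
      _ = 0 := by
        simp only [ybar, R, n]
        field_simp
        ring

lemma abs_weightedMean_sub_mean_le [Nonempty V] {y : V → ℝ} {a b : ℝ}
    (hdt : ∀ v, 1 ≤ dt v) (hdtd : ∀ v, dt v ≤ d v) (hpi : ∀ v, pi v = d v / ∑ u, d u)
    (hpit0 : ∀ v, 0 ≤ pit v) (hpit1 : ∑ v, pit v = 1) (hy : ∀ v, y v ∈ Set.Icc a b) :
    |(∑ v, pit v * y v / dt v) / (∑ v, pit v / dt v) - (∑ v, y v) / Fintype.card V| ≤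
      (b - a) * (∑ v, (d v - dt v) + (∑ v, d v) * tvDist pit pi) / Fintype.card V := by
  rw [abs_sub_le_iff]
  refine ⟨weightedMean_sub_mean_le hdt hdtd hpi hpit0 hpit1 hy, ?_⟩
  have hneg := weightedMean_sub_mean_le (y := fun v => -y v) (a := -b) (b := -a) hdt hdtd hpi
    hpit0 hpit1 fun v => ⟨neg_le_neg (hy v).2, neg_le_neg (hy v).1⟩
  simp only [mul_neg, neg_div, sum_neg_distrib, neg_sub_neg] at hneg
  linarith

end WeightedMean

theorem stmt11_general [Fintype V] [Nonempty V]
    (E F : Finset (V × V))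
    (d : V → ℕ) (hd : ∀ v, d v = (Finset.univ.filter fun u => (v, u) ∈ E).card)
    (dbar : ℝ) (hdbar : dbar = (1 / (Fintype.card V : ℝ)) * ∑ v, (d v : ℝ))
    (pi : V → ℝ) (hpi : ∀ v, pi v = (d v : ℝ) / ((Fintype.card V : ℝ) * dbar))
    (hF : F ⊆ E)
    (dt : V → ℕ) (hdt : ∀ v, dt v = (Finset.univ.filter fun u => (v, u) ∈ E \ F).card)
    (hdt1 : ∀ v, 1 ≤ dt v)
    (Pt : Matrix V V ℝ)
    (pit : V → ℝ) (hpit : InvariantProb Pt pit)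
    (y : V → ℝ) (ybar ytil : ℝ)
    (hybar : ybar = (1 / (Fintype.card V : ℝ)) * ∑ v, y v)
    (hytil : ytil = (∑ v, pit v * y v / (dt v : ℝ)) / (∑ v, pit v / (dt v : ℝ))) :
    |ytil - ybar| ≤ 2 * dbar * (Finset.univ.sup' Finset.univ_nonempty fun v => |y v|) *
      ((F.card : ℝ) / (E.card : ℝ) + tvDist pit pi) := by
  obtain ⟨hpit0, hpit1, -⟩ := hpit
  have hdtd : ∀ v, dt v ≤ d v := fun v => by
    rw [hd, hdt]
    exact card_le_card fun u hu => by
      simp only [mem_filter] at hu ⊢; exact ⟨hu.1, (mem_sdiff.1 hu.2).1⟩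
  have hE : ∑ v, (d v : ℝ) = #E := by
    simp only [hd]; exact_mod_cast sum_card_filter_mem E
  have hF' : ∑ v, ((d v : ℝ) - dt v) = #F := by
    have hEF : ∑ v, (dt v : ℝ) = #(E \ F) := by
      simp only [hdt]; exact_mod_cast sum_card_filter_mem (E \ F)
    rw [sum_sub_distrib, hE, hEF, card_sdiff_of_subset hF, Nat.cast_sub (card_le_card hF)]
    ring
  have hEpos : (0 : ℝ) < #E := hE ▸ sum_pos (fun v _ => by
    exact_mod_cast (hdt1 v).trans (hdtd v)) univ_nonempty
  have hdbar' : dbar = #E / Fintype.card V := by rw [hdbar, ← hE, one_div_mul_eq_div]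
  have hy : ∀ v, y v ∈ Set.Icc (-univ.sup' univ_nonempty fun v => |y v|)
      (univ.sup' univ_nonempty fun v => |y v|) := fun v =>
    abs_le.1 (le_sup' (fun v => |y v|) (mem_univ v))
  have key := abs_weightedMean_sub_mean_le (d := fun v => (d v : ℝ)) (dt := fun v => (dt v : ℝ))
    (pi := pi) (fun v => by exact_mod_cast hdt1 v) (fun v => by exact_mod_cast hdtd v)
    (fun v => by rw [hpi, hdbar', hE]; field_simp) hpit0 hpit1 hy
  rw [hytil, hybar, one_div_mul_eq_div]
  refine key.trans (le_of_eq ?_)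
  rw [hF', hE, hdbar']
  field_simp
  ring

/-- distributed averaging with faulty communication links:
`|ỹ - ȳ| ≤ 2 d̄ ‖y‖_∞ (|F|/|E| + ‖π̃ - π‖)`. -/
theorem stmt11 [Fintype V] [Nonempty V]
    (E F : Finset (V × V))
    (hsym : ∀ u v : V, (u, v) ∈ E → (v, u) ∈ E)
    (hconn : ∀ u v : V, Relation.ReflTransGen (fun a b => (a, b) ∈ E) u v)
    (d : V → ℕ) (hd : ∀ v, d v = (Finset.univ.filter fun u => (v, u) ∈ E).card)
    (hd1 : ∀ v, 1 ≤ d v)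
    (dbar : ℝ) (hdbar : dbar = (1 / (Fintype.card V : ℝ)) * ∑ v, (d v : ℝ))
    (pi : V → ℝ) (hpi : ∀ v, pi v = (d v : ℝ) / ((Fintype.card V : ℝ) * dbar))
    (hF : F ⊆ E)
    (dt : V → ℕ) (hdt : ∀ v, dt v = (Finset.univ.filter fun u => (v, u) ∈ E \ F).card)
    (hdt1 : ∀ v, 1 ≤ dt v)
    (hconn2 : ∀ u v : V, Relation.ReflTransGen (fun a b => (a, b) ∈ E \ F) u v)
    (Pt : Matrix V V ℝ)
    (hPt : ∀ u v, Pt u v =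
      ((if u = v then (1 : ℝ) else 0) + (if (u, v) ∈ E \ F then 1 / (dt u : ℝ) else 0)) / 2)
    (pit : V → ℝ) (hpit : InvariantProb Pt pit)
    (y : V → ℝ) (ybar ytil : ℝ)
    (hybar : ybar = (1 / (Fintype.card V : ℝ)) * ∑ v, y v)
    (hytil : ytil = (∑ v, pit v * y v / (dt v : ℝ)) / (∑ v, pit v / (dt v : ℝ))) :
    |ytil - ybar| ≤ 2 * dbar * (Finset.univ.sup' Finset.univ_nonempty fun v => |y v|) *
      ((F.card : ℝ) / (E.card : ℝ) + tvDist pit pi) :=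
  stmt11_general E F d hd dbar hdbar pi hpi hF dt hdt hdt1 Pt pit hpit y ybar ytil hybar hytil
end
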